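/- For all N ≥ 0 and M ≥ 1, σ(ξ_{2N+1}ξ_{2N+2}…ξ_{2N+2M}) = ξ_{4N+1}ξ_{4N+2}…ξ_{4N+4M}. -/
import Mathlib

inductive A : Type
  | a | b | c | d
deriving DecidableEq

def subst : A → List A
  | A.a => [A.a, A.c, A.a]
  | A.b => [A.d]
  | A.c => [A.b]
  | A.d => [A.c]

def substW (u : List A) : List A := u.flatMap subst

def wrd (n : ℕ) : List A := substW^[n - 1] [A.a]

def ltr (n : ℕ) : List A := substW^[n - 1] [A.c]

def seg (ξ : ℕ → A) (s m : ℕ) : List A := (List.range m).map fun i => ξ (s + 1 + i)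

def IsFixed (ξ : ℕ → A) : Prop :=
  ∀ N : ℕ, seg ξ 0 ((substW (seg ξ 0 N)).length) = substW (seg ξ 0 N)

lemma substW_append (u v : List A) : substW (u ++ v) = substW u ++ substW v := by
  simp [substW]

lemma seg_append (ξ : ℕ → A) (s m n : ℕ) :
    seg ξ s (m + n) = seg ξ s m ++ seg ξ (s + m) n := by
  simp [seg, List.range_add, List.map_map]
  intro i _
  congr 1
  omega

lemma seg_one (ξ : ℕ → A) (s : ℕ) : seg ξ s 1 = [ξ (s + 1)] := by
  simp [seg, List.range_succ]

lemma seg_two (ξ : ℕ → A) (s : ℕ) : seg ξ s 2 = [ξ (s + 1), ξ (s + 2)] := by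
  simp [seg, List.range_succ]

lemma seg_three (ξ : ℕ → A) (s : ℕ) :
    seg ξ s 3 = [ξ (s + 1), ξ (s + 2), ξ (s + 3)] := by
  simp [seg, List.range_succ]

lemma seg_four (ξ : ℕ → A) (s : ℕ) :
    seg ξ s 4 = [ξ (s + 1), ξ (s + 2), ξ (s + 3), ξ (s + 4)] := by
  simp [seg, List.range_succ]

lemma subst_len_one {y : A} (hy : y ≠ A.a) : (subst y).length = 1 := by
  cases y <;> simp_all [subst]

lemma len4 (ξ : ℕ → A) (N : ℕ) :
    ∀ M, (∀ k, k < M → ξ (2 * N + 2 * k + 1) = A.a ∧ ξ (2 * N + 2 * k + 2) ≠ A.a) →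
      (substW (seg ξ (2 * N) (2 * M))).length = 4 * M := by
  intro M
  induction M with
  | zero => intro _; simp [seg, substW]
  | succ m ih =>
    intro h
    have h2m : 2 * (m + 1) = 2 * m + 2 := by ring
    rw [h2m, seg_append, substW_append, seg_two]
    have hm := ih (fun k hk => h k (by omega))
    have ha := (h m (by omega)).1
    have hb := (h m (by omega)).2
    have e1 : 2 * N + 2 * m + 1 = 2 * N + 2 * m + 1 := rfl
    have : substW [ξ (2 * N + 2 * m + 1), ξ (2 * N + 2 * m + 2)]
        = subst (ξ (2 * N + 2 * m + 1)) ++ subst (ξ (2 * N + 2 * m + 2)) := by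
      simp [substW]
    rw [this, ha]
    simp only [List.length_append, hm, subst_len_one hb,
      show subst A.a = [A.a, A.c, A.a] from rfl, List.length_cons, List.length_nil]
    ring

lemma base1 (ξ : ℕ → A) (hξ : IsFixed ξ) : ξ 1 = A.a ∧ ξ 2 ≠ A.a := by
  have H := hξ 1
  rw [seg_one] at H
  cases h1 : ξ 1 with
  | a =>
    rw [h1] at H
    have hs : substW [A.a] = [A.a, A.c, A.a] := by simp [substW, subst]
    rw [hs] at H
    simp only [List.length_cons, List.length_nil] at H
    rw [seg_three] at H
    simp at H
    obtain ⟨-, h2, -⟩ := H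
    exact ⟨rfl, by rw [h2]; decide⟩
  | b =>
    rw [h1] at H
    have hs : substW [A.b] = [A.d] := by simp [substW, subst]
    rw [hs] at H
    simp only [List.length_cons, List.length_nil] at H
    rw [seg_one] at H
    simp at H
    rw [h1] at H
    exact absurd H (by decide)
  | c =>
    rw [h1] at H
    have hs : substW [A.c] = [A.b] := by simp [substW, subst]
    rw [hs] at H
    simp only [List.length_cons, List.length_nil] at H
    rw [seg_one] at H
    simp at H
    rw [h1] at H
    exact absurd H (by decide)
  | d =>
    rw [h1] at H
    have hs : substW [A.d] = [A.c] := by simp [substW, subst]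
    rw [hs] at H
    simp only [List.length_cons, List.length_nil] at H
    rw [seg_one] at H
    simp at H
    rw [h1] at H
    exact absurd H (by decide)

lemma key (ξ : ℕ → A) (hξ : IsFixed ξ) (i : ℕ)
    (hq : ∀ k, k < i + 1 → ξ (2 * k + 1) = A.a ∧ ξ (2 * k + 2) ≠ A.a) :
    (ξ (4 * i + 1) = A.a ∧ ξ (4 * i + 2) ≠ A.a) ∧
      (ξ (4 * i + 3) = A.a ∧ ξ (4 * i + 4) ≠ A.a) := by
  have hq0 : ∀ k, k < i → ξ (2 * 0 + 2 * k + 1) = A.a ∧ ξ (2 * 0 + 2 * k + 2) ≠ A.a := by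
    intro k hk; simpa using hq k (by omega)
  have hq1 : ∀ k, k < i + 1 → ξ (2 * 0 + 2 * k + 1) = A.a ∧ ξ (2 * 0 + 2 * k + 2) ≠ A.a := by
    intro k hk; simpa using hq k hk
  have L1 := len4 ξ 0 i hq0
  have L2 := len4 ξ 0 (i + 1) hq1
  rw [show (2:ℕ) * 0 = 0 from rfl] at L1 L2
  have h1 := hξ (2 * i)
  rw [L1] at h1
  have h2 := hξ (2 * (i + 1))
  rw [L2] at h2
  have e2 : 2 * (i + 1) = 2 * i + 2 := by ring
  have e4 : 4 * (i + 1) = 4 * i + 4 := by ring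
  rw [e2, e4, seg_append ξ 0 (2 * i) 2, substW_append, seg_append ξ 0 (4 * i) 4, ← h1] at h2
  have hc : seg ξ (0 + 4 * i) 4 = substW (seg ξ (0 + 2 * i) 2) :=
    List.append_cancel_left h2
  have ha := (hq i (by omega)).1
  have hb := (hq i (by omega)).2
  rw [seg_two, seg_four,
      show (0:ℕ) + 2 * i + 1 = 2 * i + 1 by ring, show (0:ℕ) + 2 * i + 2 = 2 * i + 2 by ring,
      show (0:ℕ) + 4 * i + 1 = 4 * i + 1 by ring, show (0:ℕ) + 4 * i + 2 = 4 * i + 2 by ring,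
      show (0:ℕ) + 4 * i + 3 = 4 * i + 3 by ring, show (0:ℕ) + 4 * i + 4 = 4 * i + 4 by ring,
      ha] at hc
  cases hy : ξ (2 * i + 2) with
  | a => exact absurd hy hb
  | b =>
    rw [hy] at hc
    simp [substW, subst] at hc
    obtain ⟨k1, k2, k3, k4⟩ := hc
    exact ⟨⟨k1, by rw [k2]; decide⟩, ⟨k3, by rw [k4]; decide⟩⟩
  | c =>
    rw [hy] at hc
    simp [substW, subst] at hc
    obtain ⟨k1, k2, k3, k4⟩ := hc
    exact ⟨⟨k1, by rw [k2]; decide⟩, ⟨k3, by rw [k4]; decide⟩⟩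
  | d =>
    rw [hy] at hc
    simp [substW, subst] at hc
    obtain ⟨k1, k2, k3, k4⟩ := hc
    exact ⟨⟨k1, by rw [k2]; decide⟩, ⟨k3, by rw [k4]; decide⟩⟩

lemma halt (ξ : ℕ → A) (hξ : IsFixed ξ) :
    ∀ k, ξ (2 * k + 1) = A.a ∧ ξ (2 * k + 2) ≠ A.a := by
  have main : ∀ n, ∀ k, k < n → ξ (2 * k + 1) = A.a ∧ ξ (2 * k + 2) ≠ A.a := by
    intro n
    induction n with
    | zero => intro k hk; omega
    | succ m ih =>
      intro k hk
      rcases Nat.lt_or_ge k m with h | h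
      · exact ih k h
      · have hk' : k = m := by omega
        subst hk'
        rcases Nat.eq_zero_or_pos k with h0 | h0
        · subst h0
          have := base1 ξ hξ
          simpa using this
        · set i := k / 2 with hi
          have hilt : i + 1 ≤ k := by omega
          have hq : ∀ j, j < i + 1 → ξ (2 * j + 1) = A.a ∧ ξ (2 * j + 2) ≠ A.a := by
            intro j hj; exact ih j (by omega)
          have hk2 := key ξ hξ i hq
          rcases Nat.even_or_odd k with ⟨t, ht⟩ | ⟨t, ht⟩
          · have e1 : 2 * k + 1 = 4 * i + 1 := by omega
            have e2 : 2 * k + 2 = 4 * i + 2 := by omega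
            rw [e1, e2]
            exact hk2.1
          · have e1 : 2 * k + 1 = 4 * i + 3 := by omega
            have e2 : 2 * k + 2 = 4 * i + 4 := by omega
            rw [e1, e2]
            exact hk2.2
  intro k
  exact main (k + 1) k (by omega)

theorem stmt5 (ξ : ℕ → A) (hξ : IsFixed ξ) :
    ∀ N M : ℕ, 1 ≤ M → substW (seg ξ (2 * N) (2 * M)) = seg ξ (4 * N) (4 * M) := by
  intro N M _
  have hq := halt ξ hξ
  have hqN : ∀ k, k < N → ξ (2 * 0 + 2 * k + 1) = A.a ∧ ξ (2 * 0 + 2 * k + 2) ≠ A.a := by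
    intro k _; simpa using hq k
  have hqNM : ∀ k, k < N + M → ξ (2 * 0 + 2 * k + 1) = A.a ∧ ξ (2 * 0 + 2 * k + 2) ≠ A.a := by
    intro k _; simpa using hq k
  have L1 := len4 ξ 0 N hqN
  have L2 := len4 ξ 0 (N + M) hqNM
  rw [show (2:ℕ) * 0 = 0 from rfl] at L1 L2
  have h1 := hξ (2 * N)
  rw [L1] at h1
  have h2 := hξ (2 * (N + M))
  rw [L2] at h2
  have e2 : 2 * (N + M) = 2 * N + 2 * M := by ring
  have e4 : 4 * (N + M) = 4 * N + 4 * M := by ring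
  rw [e2, e4, seg_append ξ 0 (2 * N) (2 * M), substW_append,
      seg_append ξ 0 (4 * N) (4 * M), ← h1] at h2
  have hc : seg ξ (0 + 4 * N) (4 * M) = substW (seg ξ (0 + 2 * N) (2 * M)) :=
    List.append_cancel_left h2
  rw [show (0:ℕ) + 4 * N = 4 * N by ring, show (0:ℕ) + 2 * N = 2 * N by ring] at hc
  exact hc.symm
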